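/- arXiv:1401.0496 — 5 statements merged into one kernel-verified Lean document; each statement's English description precedes it below -/
import Mathlib

section
/- If a nondecreasing function a : ℝ≥0 → ℝ≥0 satisfies a(0)=0 and lim_{s→0+} a(s)=0, then the function ã defined by ã(s) = (1/s)∫_s^{2s} a(w) dw for s>0 and ã(0)=0 is continuous, nondecreasing, and satisfies a(s) ≤ ã(s) ≤ a(2s) for all s ≥ 0. -/
/-!
Substituting `w = s t` writes the mean as `ã(s) = ∫₁² a(s t) dt`, an average of the values of
`a` on `[s, 2s]` whose integrand is pointwise nondecreasing in `s`; this gives the bounds and the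
monotonicity. For `s > 0`, `ã(s)` is `1/s` times a difference of values of a primitive of `a`,
hence continuous; at `0` it is squeezed between `0` and `a(2s) → 0`.
-/

open Set Filter Topology MeasureTheory intervalIntegral

theorem continuousOn_intervalIntegral_of_mapsTo {E : Type*} [NormedAddCommGroup E]
    [NormedSpace ℝ E] {f : ℝ → E} {c d : ℝ} (hf : IntervalIntegrable f volume c d)
    {u v : ℝ → ℝ} {S : Set ℝ}
    (hu : ContinuousOn u S) (hv : ContinuousOn v S) (huS : MapsTo u S (uIcc c d))
    (hvS : MapsTo v S (uIcc c d)) : ContinuousOn (fun x => ∫ t in u x..v x, f t) S := by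
  have hF : ContinuousOn (fun b => ∫ t in c..b, f t) (uIcc c d) :=
    continuousOn_primitive_interval' hf left_mem_uIcc
  refine ((hF.comp hv hvS).sub (hF.comp hu huS)).congr fun x hx => ?_
  have hint : ∀ b ∈ uIcc c d, IntervalIntegrable f volume c b := fun b hb =>
    hf.mono_set (uIcc_subset_uIcc left_mem_uIcc hb)
  exact (integral_interval_sub_left (hint _ (hvS hx)) (hint _ (huS hx))).symm

/-- At `s = 0` this is `0⁻¹ * 0 = 0`, matching `ã(0) = 0`. -/
noncomputable def dyadicMean (a : ℝ → ℝ) (s : ℝ) : ℝ :=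
  s⁻¹ * ∫ w in s..2 * s, a w

section DyadicMean

variable {a : ℝ → ℝ} {s : ℝ}

@[simp]
theorem dyadicMean_zero : dyadicMean a 0 = 0 := by
  simp [dyadicMean]

theorem dyadicMean_eq_integral_comp_mul (hs : s ≠ 0) :
    dyadicMean a s = ∫ t in (1 : ℝ)..2, a (s * t) := by
  rw [integral_comp_mul_left a hs, mul_one, smul_eq_mul, dyadicMean, mul_comm 2 s]

theorem MonotoneOn.intervalIntegrable_of_pos (ha : MonotoneOn a (Ioi 0)) {x y : ℝ} (hx : 0 < x)
    (hy : 0 < y) : IntervalIntegrable a volume x y :=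
  (ha.mono fun _ hw => (lt_min hx hy).trans_le hw.1).intervalIntegrable

theorem MonotoneOn.comp_mul_left_Ioi (ha : MonotoneOn a (Ioi 0)) (hs : 0 < s) :
    MonotoneOn (fun t => a (s * t)) (Ioi 0) := fun _ hx _ hy hxy =>
  ha (mul_pos hs hx) (mul_pos hs hy) (mul_le_mul_of_nonneg_left hxy hs.le)

theorem le_dyadicMean (ha : MonotoneOn a (Ioi 0)) (hs : 0 < s) : a s ≤ dyadicMean a s := by
  have hint := (ha.comp_mul_left_Ioi hs).intervalIntegrable_of_pos one_pos two_pos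
  have h := integral_mono_on one_le_two intervalIntegrable_const hint fun t ht =>
    ha.comp_mul_left_Ioi hs (mem_Ioi.2 one_pos) (one_pos.trans_le ht.1) ht.1
  norm_num at h
  rwa [dyadicMean_eq_integral_comp_mul hs.ne']

theorem dyadicMean_le (ha : MonotoneOn a (Ioi 0)) (hs : 0 < s) : dyadicMean a s ≤ a (2 * s) := by
  have hint := (ha.comp_mul_left_Ioi hs).intervalIntegrable_of_pos one_pos two_pos
  have h := integral_mono_on one_le_two hint intervalIntegrable_const fun t ht =>
    ha.comp_mul_left_Ioi hs (one_pos.trans_le ht.1) (mem_Ioi.2 two_pos) ht.2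
  norm_num at h
  rwa [dyadicMean_eq_integral_comp_mul hs.ne', mul_comm 2]

theorem monotoneOn_dyadicMean (ha : MonotoneOn a (Ioi 0)) :
    MonotoneOn (dyadicMean a) (Ioi 0) := by
  intro x (hx : 0 < x) y (hy : 0 < y) hxy
  rw [dyadicMean_eq_integral_comp_mul hx.ne', dyadicMean_eq_integral_comp_mul hy.ne']
  refine integral_mono_on one_le_two
    ((ha.comp_mul_left_Ioi hx).intervalIntegrable_of_pos one_pos two_pos)
    ((ha.comp_mul_left_Ioi hy).intervalIntegrable_of_pos one_pos two_pos) fun t ht => ?_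
  have ht0 : 0 < t := one_pos.trans_le ht.1
  exact ha (mul_pos hx ht0) (mul_pos hy ht0) (mul_le_mul_of_nonneg_right hxy ht0.le)

theorem continuousOn_dyadicMean (ha : MonotoneOn a (Ioi 0)) :
    ContinuousOn (dyadicMean a) (Ioi 0) := by
  intro s (hs : 0 < s)
  have hint : IntervalIntegrable a volume (s / 2) (4 * s) :=
    ha.intervalIntegrable_of_pos (by positivity) (by positivity)
  have hmaps : ∀ k : ℝ, 1 ≤ k → k ≤ 2 →
      MapsTo (fun x => k * x) (Icc (s / 2) (2 * s)) (uIcc (s / 2) (4 * s)) :=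
    fun k hk1 hk2 x hx => by
      rw [uIcc_of_le (by linarith)]
      exact ⟨by nlinarith [hx.1], by nlinarith [hx.2]⟩
  have hI : ContinuousOn (fun x => ∫ w in x..2 * x, a w) (Icc (s / 2) (2 * s)) := by
    simpa using continuousOn_intervalIntegral_of_mapsTo hint
      (continuousOn_const.mul continuousOn_id) (continuousOn_const.mul continuousOn_id)
      (hmaps 1 le_rfl one_le_two) (hmaps 2 one_le_two le_rfl)
  have hIs : ContinuousAt (fun x => ∫ w in x..2 * x, a w) s :=
    hI.continuousAt (Icc_mem_nhds (by linarith) (by linarith))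
  exact ((continuousAt_inv₀ hs.ne').mul hIs).continuousWithinAt

theorem monotoneOn_Ici_dyadicMean (ha : MonotoneOn a (Ici 0)) (h0 : a 0 = 0) :
    MonotoneOn (dyadicMean a) (Ici 0) := by
  intro x hx y hy hxy
  rcases (mem_Ici.1 hx).eq_or_lt with rfl | hx
  · rcases (mem_Ici.1 hy).eq_or_lt with rfl | hy
    · exact le_rfl
    calc dyadicMean a 0 = a 0 := by rw [dyadicMean_zero, h0]
      _ ≤ a y := ha self_mem_Ici hy.le hxy
      _ ≤ dyadicMean a y := le_dyadicMean (ha.mono Ioi_subset_Ici_self) hy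
  · exact monotoneOn_dyadicMean (ha.mono Ioi_subset_Ici_self) hx (hx.trans_le hxy) hxy

theorem continuousWithinAt_Ici_dyadicMean_zero (ha : MonotoneOn a (Ici 0)) (h0 : a 0 = 0)
    (hlim : Tendsto a (𝓝[>] 0) (𝓝 0)) : ContinuousWithinAt (dyadicMean a) (Ici 0) 0 := by
  rw [← continuousWithinAt_Ioi_iff_Ici, ContinuousWithinAt, dyadicMean_zero]
  have hdouble : Tendsto (fun s : ℝ => 2 * s) (𝓝[>] 0) (𝓝[>] 0) := by
    have hmaps : MapsTo (fun s : ℝ => 2 * s) (Ioi 0) (Ioi 0) := fun _ hs =>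
      mem_Ioi.2 (mul_pos two_pos hs)
    simpa using
      ((continuous_const_mul (2 : ℝ)).continuousWithinAt (x := 0)).tendsto_nhdsWithin hmaps
  refine tendsto_of_tendsto_of_tendsto_of_le_of_le' tendsto_const_nhds (hlim.comp hdouble) ?_ ?_
  · filter_upwards [self_mem_nhdsWithin] with s (hs : 0 < s)
    calc 0 = a 0 := h0.symm
      _ ≤ a s := ha self_mem_Ici hs.le hs.le
      _ ≤ dyadicMean a s := le_dyadicMean (ha.mono Ioi_subset_Ici_self) hs
  · filter_upwards [self_mem_nhdsWithin] with s (hs : 0 < s)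
    exact dyadicMean_le (ha.mono Ioi_subset_Ici_self) hs

theorem continuousOn_Ici_dyadicMean (ha : MonotoneOn a (Ici 0)) (h0 : a 0 = 0)
    (hlim : Tendsto a (𝓝[>] 0) (𝓝 0)) : ContinuousOn (dyadicMean a) (Ici 0) := by
  intro s hs
  rcases (mem_Ici.1 hs).eq_or_lt with rfl | hs
  · exact continuousWithinAt_Ici_dyadicMean_zero ha h0 hlim
  · exact ((continuousOn_dyadicMean (ha.mono Ioi_subset_Ici_self)).continuousAt
      (Ioi_mem_nhds hs)).continuousWithinAt

end DyadicMean

theorem stmt_0_general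
    (a : ℝ → ℝ)
    (ha_mono : MonotoneOn a (Set.Ici 0))
    (ha_zero : a 0 = 0)
    (ha_lim : Filter.Tendsto a (nhdsWithin 0 (Set.Ioi 0)) (nhds 0))
    (atil : ℝ → ℝ)
    (hatil : ∀ s, 0 < s → atil s = (1 / s) * ∫ w in s..(2 * s), a w)
    (hatil0 : atil 0 = 0) :
    ContinuousOn atil (Set.Ici 0) ∧ MonotoneOn atil (Set.Ici 0) ∧
      ∀ s, 0 ≤ s → a s ≤ atil s ∧ atil s ≤ a (2 * s) := by
  have hmean : EqOn atil (dyadicMean a) (Ici 0) := by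
    intro s hs
    rcases (mem_Ici.1 hs).eq_or_lt with rfl | hs
    · rw [hatil0, dyadicMean_zero]
    · rw [hatil s hs, dyadicMean, one_div]
  have ha_pos : MonotoneOn a (Ioi 0) := ha_mono.mono Ioi_subset_Ici_self
  refine ⟨(continuousOn_Ici_dyadicMean ha_mono ha_zero ha_lim).congr hmean,
    (monotoneOn_Ici_dyadicMean ha_mono ha_zero).congr hmean.symm, fun s hs => ?_⟩
  rw [hmean hs]
  rcases hs.eq_or_lt with rfl | hs
  · simp [ha_zero]
  · exact ⟨le_dyadicMean ha_pos hs, dyadicMean_le ha_pos hs⟩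

theorem stmt_0
    (a : ℝ → ℝ)
    (ha_nonneg : ∀ s, 0 ≤ s → 0 ≤ a s)
    (ha_mono : MonotoneOn a (Set.Ici 0))
    (ha_zero : a 0 = 0)
    (ha_lim : Filter.Tendsto a (nhdsWithin 0 (Set.Ioi 0)) (nhds 0))
    (atil : ℝ → ℝ)
    (hatil : ∀ s, 0 < s → atil s = (1 / s) * ∫ w in s..(2 * s), a w)
    (hatil0 : atil 0 = 0) :
    ContinuousOn atil (Set.Ici 0) ∧ MonotoneOn atil (Set.Ici 0) ∧
      ∀ s, 0 ≤ s → a s ≤ atil s ∧ atil s ≤ a (2 * s) :=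
  stmt_0_general a ha_mono ha_zero ha_lim atil hatil hatil0
end

section
/- Consider the discrete-time system x⁺ = F(d,x) on a closed set S ⊆ ℝⁿ with equilibrium x* (F(d,x*) = x* for all d ∈ D, D compact). Suppose A ⊆ S is a trapping region with transient bound m, there exist functions V_i : S → ℝ≥0 (i = 1,…,l), a nonnegative matrix Γ ∈ ℝ_{≥0}^{l×l} with spectral radius ρ(Γ) < 1, and constants K₂ ≥ K₁ > 0, p > 0, such that K₁|x−x*|^p ≤ max_i V_i(x) ≤ K₂|x−x*|^p for all x ∈ A, and V_i(F(d,x)) ≤ Σ_j γ_{i,j} V_j(x) for all x ∈ A, d ∈ D, i. Suppose moreover there is L ≥ 0 with |F(d,x)−x*| ≤ L|x−x*| for all x ∈ S and d ∈ D. Then x* is robustly globally exponentially stable: there exist constants M̃, σ̃ > 0 such that every solution satisfies |x(t)−x*| ≤ M̃ exp(−σ̃ t)|x(0)−x*| for all t ∈ ℕ. -/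
/-!
By Gelfand's formula, `ρ(Γ) < 1` makes the entries of `Γ ^ k` decay like `C r ^ k` with `r < 1`.
Since `Γ ≥ 0`, the componentwise inequality `V(F(d, x)) ≤ Γ V(x)` iterates along a solution once it
has entered `A`, so the sandwich `K₁ ‖x - x*‖ ^ p ≤ max V ≤ K₂ ‖x - x*‖ ^ p` gives
`‖x(t) - x*‖ ≤ c r ^ ((t - m) / p) ‖x(m) - x*‖` for `t ≥ m`. During the transient `t < m` the
Lipschitz bound gives `‖x(t) - x*‖ ≤ max L 1 ^ m ‖x(0) - x*‖`, and both regimes combine into a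
single exponential estimate with rate `σ = -log r / p`.
-/

open scoped NNReal ENNReal Matrix
open Filter Asymptotics

theorem spectrum.exists_norm_pow_le_of_spectralRadius_lt {A : Type*} [NormedRing A]
    [NormedAlgebra ℂ A] [CompleteSpace A] {a : A} {r : ℝ≥0} (h : spectralRadius ℂ a < r) :
    ∃ C > 0, ∀ k : ℕ, ‖a ^ k‖ ≤ C * (r : ℝ) ^ k := by
  have hr : (r : ℝ) ≠ 0 := by exact_mod_cast (ENNReal.coe_pos.1 (pos_of_gt h)).ne'
  have hev : ∀ᶠ k : ℕ in atTop, ‖a ^ k‖ ≤ ‖(r : ℝ) ^ k‖ := by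
    filter_upwards [(pow_nnnorm_pow_one_div_tendsto_nhds_spectralRadius a).eventually_lt_const h,
      eventually_ne_atTop 0] with k hk hk0
    rw [one_div, ENNReal.rpow_inv_lt_iff (by positivity), ENNReal.rpow_natCast] at hk
    rw [norm_pow (r : ℝ), NNReal.norm_eq]
    exact_mod_cast hk.le
  obtain ⟨C, hC, hbound⟩ := bound_of_isBigO_nat_atTop (IsBigO.of_bound' hev)
  refine ⟨C, hC, fun k => ?_⟩
  simpa [norm_pow] using hbound (pow_ne_zero k hr)

section LinftyOpNorm

attribute [local instance] Matrix.linftyOpSeminormedAddCommGroup Matrix.linftyOpNormedRing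
  Matrix.linftyOpNormedAlgebra

theorem Matrix.norm_apply_le_linfty_opNorm {α m n : Type*} [SeminormedAddCommGroup α]
    [Fintype m] [Fintype n] (B : Matrix m n α) (i : m) (j : n) : ‖B i j‖ ≤ ‖B‖ := by
  have : ‖B i j‖₊ ≤ ‖B‖₊ := by
    rw [Matrix.linfty_opNNNorm_def]
    exact (Finset.single_le_sum (fun _ _ => zero_le) (Finset.mem_univ j)).trans
      (Finset.le_sup (f := fun i => ∑ j, ‖B i j‖₊) (Finset.mem_univ i))
  exact_mod_cast this

theorem Matrix.exists_norm_pow_apply_le_geometric {ι : Type*} [Fintype ι] [DecidableEq ι]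
    (B : Matrix ι ι ℂ) (h : ∀ μ : ℂ, B.charpoly.IsRoot μ → ‖μ‖ < 1) :
    ∃ C r : ℝ, 0 < C ∧ 0 < r ∧ r < 1 ∧ ∀ k (i j : ι), ‖(B ^ k) i j‖ ≤ C * r ^ k := by
  cases isEmpty_or_nonempty ι
  · exact ⟨1, 1 / 2, one_pos, by norm_num, by norm_num, fun _ i => isEmptyElim i⟩
  have hρ : spectralRadius ℂ B < 1 := by
    simpa using spectrum.spectralRadius_lt_of_forall_lt B (r := 1) fun μ hμ => by
      exact_mod_cast h μ (Matrix.mem_spectrum_iff_isRoot_charpoly.1 hμ)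
  obtain ⟨r, hBr, hr1⟩ := ENNReal.lt_iff_exists_nnreal_btwn.1 hρ
  obtain ⟨C, hC, hpow⟩ := spectrum.exists_norm_pow_le_of_spectralRadius_lt hBr
  exact ⟨C, r, hC, by exact_mod_cast ENNReal.coe_pos.1 (pos_of_gt hBr), by exact_mod_cast hr1,
    fun k i j => ((B ^ k).norm_apply_le_linfty_opNorm i j).trans (hpow k)⟩

end LinftyOpNorm

theorem Matrix.exists_pow_apply_le_geometric {ι : Type*} [Fintype ι] [DecidableEq ι]
    (Γ : Matrix ι ι ℝ) (h : ∀ μ : ℂ, (Γ.map Complex.ofReal).charpoly.IsRoot μ → ‖μ‖ < 1) :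
    ∃ C r : ℝ, 0 < C ∧ 0 < r ∧ r < 1 ∧ ∀ k (i j : ι), (Γ ^ k) i j ≤ C * r ^ k := by
  obtain ⟨C, r, hC, hr0, hr1, hpow⟩ := (Γ.map Complex.ofReal).exists_norm_pow_apply_le_geometric h
  refine ⟨C, r, hC, hr0, hr1, fun k i j => (le_abs_self _).trans ?_⟩
  have hmap : Γ.map Complex.ofReal ^ k = (Γ ^ k).map Complex.ofReal :=
    (Matrix.map_pow Γ Complex.ofRealHom k).symm
  simpa [hmap, Complex.norm_real] using hpow k i j

theorem Matrix.mulVec_mono_of_nonneg {R m n : Type*} [Semiring R] [PartialOrder R]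
    [IsOrderedRing R] [Fintype n] {Γ : Matrix m n R} (hΓ : ∀ i j, 0 ≤ Γ i j) {u w : n → R}
    (h : u ≤ w) : Γ *ᵥ u ≤ Γ *ᵥ w := fun i =>
  Finset.sum_le_sum fun j _ => mul_le_mul_of_nonneg_left (h j) (hΓ i j)

theorem Matrix.le_pow_mulVec_of_le_mulVec {R ι : Type*} [Semiring R] [PartialOrder R]
    [IsOrderedRing R] [Fintype ι] [DecidableEq ι] {Γ : Matrix ι ι R} (hΓ : ∀ i j, 0 ≤ Γ i j)
    {v : ℕ → ι → R} (hv : ∀ s, v (s + 1) ≤ Γ *ᵥ v s) (s : ℕ) : v s ≤ (Γ ^ s) *ᵥ v 0 := by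
  induction s with
  | zero => simp
  | succ s ih => calc
      v (s + 1) ≤ Γ *ᵥ v s := hv s
      _ ≤ Γ *ᵥ (Γ ^ s) *ᵥ v 0 := Matrix.mulVec_mono_of_nonneg hΓ ih
      _ = (Γ ^ (s + 1)) *ᵥ v 0 := by rw [Matrix.mulVec_mulVec, pow_succ']

theorem Real.le_rpow_inv_mul_of_rpow_le {a b c p : ℝ} (ha : 0 ≤ a) (hb : 0 ≤ b) (hc : 0 ≤ c)
    (hp : 0 < p) (h : a ^ p ≤ c * b ^ p) : a ≤ c ^ p⁻¹ * b := by
  rwa [← Real.rpow_le_rpow_iff ha (by positivity) hp, Real.mul_rpow (by positivity) hb,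
    Real.rpow_inv_rpow hc hp.ne']

theorem exists_uniform_exp_bound_of_transient {L C ρ : ℝ} (m : ℕ) (hρ0 : 0 < ρ) (hρ1 : ρ ≤ 1) :
    ∃ M > 0, ∀ e : ℕ → ℝ, 0 ≤ e → (∀ t, e (t + 1) ≤ L * e t) →
      (∀ t, m ≤ t → e t ≤ C * ρ ^ (t - m) * e m) → ∀ t, e t ≤ M * ρ ^ t * e 0 := by
  set Λ := max L 1
  refine ⟨max C 1 * Λ ^ m / ρ ^ m, by positivity, fun e he hstep hdecay t => ?_⟩
  have hgrowth : ∀ t, e t ≤ Λ ^ t * e 0 := by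
    intro t
    induction t with
    | zero => simp
    | succ t ih => calc
        e (t + 1) ≤ L * e t := hstep t
        _ ≤ Λ * e t := mul_le_mul_of_nonneg_right (le_max_left _ _) (he t)
        _ ≤ Λ * (Λ ^ t * e 0) := mul_le_mul_of_nonneg_left ih (by positivity)
        _ = Λ ^ (t + 1) * e 0 := by ring
  -- `t - m` truncates to `0` before the transient is over
  have hshift : e t ≤ max C 1 * Λ ^ m * ρ ^ (t - m) * e 0 := by
    rcases le_or_gt m t with hmt | htm
    · calc e t ≤ C * ρ ^ (t - m) * e m := hdecay t hmt
        _ ≤ max C 1 * ρ ^ (t - m) * (Λ ^ m * e 0) := by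
          gcongr
          exacts [he m, le_max_left _ _, hgrowth m]
        _ = _ := by ring
    · rw [Nat.sub_eq_zero_of_le htm.le, pow_zero]
      calc e t ≤ Λ ^ m * e 0 := (hgrowth t).trans <|
            mul_le_mul_of_nonneg_right (pow_le_pow_right₀ (le_max_right _ _) htm.le) (he 0)
        _ ≤ max C 1 * (Λ ^ m * e 0) :=
          le_mul_of_one_le_left (mul_nonneg (by positivity) (he 0)) (le_max_right _ _)
        _ = _ := by ring
  have hρpow : ρ ^ (t - m) ≤ ρ ^ t / ρ ^ m := by
    rw [le_div_iff₀ (by positivity), ← pow_add]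
    exact pow_le_pow_of_le_one hρ0.le hρ1 (by omega)
  calc e t ≤ max C 1 * Λ ^ m * ρ ^ (t - m) * e 0 := hshift
    _ ≤ max C 1 * Λ ^ m * (ρ ^ t / ρ ^ m) * e 0 := by gcongr; exact he 0
    _ = max C 1 * Λ ^ m / ρ ^ m * ρ ^ t * e 0 := by ring

theorem norm_sub_le_of_vectorLyapunov {E ι : Type*} [SeminormedAddCommGroup E] [Fintype ι]
    [DecidableEq ι] {A : Set E} {x₀ : E} {V : ι → E → ℝ} (hV : ∀ i x, 0 ≤ V i x)
    {Γ : Matrix ι ι ℝ} (hΓ : ∀ i j, 0 ≤ Γ i j) {C r K₁ K₂ p : ℝ} (hC : 0 ≤ C) (hr : 0 ≤ r)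
    (hΓpow : ∀ k i j, (Γ ^ k) i j ≤ C * r ^ k) (hK₁ : 0 < K₁) (hK₂ : 0 ≤ K₂) (hp : 0 < p)
    (hlow : ∀ x ∈ A, ∃ i, K₁ * ‖x - x₀‖ ^ p ≤ V i x)
    (hup : ∀ x ∈ A, ∀ i, V i x ≤ K₂ * ‖x - x₀‖ ^ p)
    {y : ℕ → E} (hyA : ∀ s, y s ∈ A) (hy : ∀ s i, V i (y (s + 1)) ≤ ∑ j, Γ i j * V j (y s))
    (s : ℕ) :
    ‖y s - x₀‖ ≤ (Fintype.card ι * C * K₂ / K₁) ^ p⁻¹ * (r ^ p⁻¹) ^ s * ‖y 0 - x₀‖ := by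
  obtain ⟨i, hi⟩ := hlow (y s) (hyA s)
  have hcomp := Matrix.le_pow_mulVec_of_le_mulVec hΓ (v := fun s i => V i (y s)) hy s i
  have hbound : K₁ * ‖y s - x₀‖ ^ p ≤
      K₁ * (Fintype.card ι * C * K₂ / K₁ * r ^ s * ‖y 0 - x₀‖ ^ p) := calc
    _ ≤ V i (y s) := hi
    _ ≤ ∑ j, (Γ ^ s) i j * V j (y 0) := hcomp
    _ ≤ ∑ _j : ι, C * r ^ s * (K₂ * ‖y 0 - x₀‖ ^ p) := Finset.sum_le_sum fun j _ =>
      mul_le_mul (hΓpow s i j) (hup _ (hyA 0) j) (hV j _) (by positivity)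
    _ = _ := by rw [Finset.sum_const, Finset.card_univ, nsmul_eq_mul]; field_simp
  have := Real.le_rpow_inv_mul_of_rpow_le (norm_nonneg _) (norm_nonneg _) (by positivity) hp
    (le_of_mul_le_mul_left hbound hK₁)
  rwa [Real.mul_rpow (by positivity) (by positivity), ← Real.rpow_pow_comm hr] at this

theorem stmt_6_general {n l lV : ℕ}
    (S : Set (EuclideanSpace ℝ (Fin n)))
    (xstar : EuclideanSpace ℝ (Fin n))
    (D : Set (EuclideanSpace ℝ (Fin l)))
    (F : EuclideanSpace ℝ (Fin l) → EuclideanSpace ℝ (Fin n) → EuclideanSpace ℝ (Fin n))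
    (hFS : ∀ d ∈ D, ∀ x ∈ S, F d x ∈ S)
    (A : Set (EuclideanSpace ℝ (Fin n)))
    (m : ℕ)
    (htrap : ∀ (x : ℕ → EuclideanSpace ℝ (Fin n)) (d : ℕ → EuclideanSpace ℝ (Fin l)),
        x 0 ∈ S → (∀ t, d t ∈ D) → (∀ t, x (t + 1) = F (d t) (x t)) →
        ∀ t, m ≤ t → x t ∈ A)
    (V : Fin lV → EuclideanSpace ℝ (Fin n) → ℝ)
    (hVnonneg : ∀ i x, 0 ≤ V i x)
    (Γ : Matrix (Fin lV) (Fin lV) ℝ)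
    (hΓ : ∀ i j, 0 ≤ Γ i j)
    (hρ : ∀ μ : ℂ, ((Γ.map Complex.ofReal).charpoly).IsRoot μ → ‖μ‖ < 1)
    (K₁ K₂ p L : ℝ) (hK₁ : 0 < K₁) (hK : K₁ ≤ K₂) (hp : 0 < p)
    (hlow : ∀ x ∈ A, ∃ i, K₁ * ‖x - xstar‖ ^ p ≤ V i x)
    (hup : ∀ x ∈ A, ∀ i, V i x ≤ K₂ * ‖x - xstar‖ ^ p)
    (hdec : ∀ d ∈ D, ∀ x ∈ A, ∀ i, V i (F d x) ≤ ∑ j, Γ i j * V j x)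
    (hLip : ∀ d ∈ D, ∀ x ∈ S, ‖F d x - xstar‖ ≤ L * ‖x - xstar‖) :
    ∃ M σ : ℝ, 0 < M ∧ 0 < σ ∧
      ∀ (x : ℕ → EuclideanSpace ℝ (Fin n)) (d : ℕ → EuclideanSpace ℝ (Fin l)),
        x 0 ∈ S → (∀ t, d t ∈ D) → (∀ t, x (t + 1) = F (d t) (x t)) →
        ∀ t : ℕ, ‖x t - xstar‖ ≤ M * Real.exp (-σ * t) * ‖x 0 - xstar‖ := by
  obtain ⟨C, r, hC, hr0, hr1, hΓpow⟩ := Γ.exists_pow_apply_le_geometric hρ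
  have hρ0 : 0 < r ^ p⁻¹ := Real.rpow_pos_of_pos hr0 _
  have hρ1 : r ^ p⁻¹ < 1 := Real.rpow_lt_one hr0.le hr1 (by positivity)
  obtain ⟨M, hM, hbound⟩ := exists_uniform_exp_bound_of_transient (L := L)
    (C := (lV * C * K₂ / K₁) ^ p⁻¹) m hρ0 hρ1.le
  refine ⟨M, -Real.log (r ^ p⁻¹), hM, neg_pos.2 (Real.log_neg hρ0 hρ1),
    fun x d hx0 hd hstep t => ?_⟩
  have hxS : ∀ t, x t ∈ S := fun t => by
    induction t with
    | zero => exact hx0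
    | succ t ih => exact hstep t ▸ hFS _ (hd t) _ ih
  have hxA := htrap x d hx0 hd hstep
  have hdecay (t : ℕ) (hmt : m ≤ t) : ‖x t - xstar‖ ≤
      (lV * C * K₂ / K₁) ^ p⁻¹ * (r ^ p⁻¹) ^ (t - m) * ‖x m - xstar‖ := by
    have := norm_sub_le_of_vectorLyapunov hVnonneg hΓ hC.le hr0.le hΓpow hK₁ (hK₁.le.trans hK)
      hp hlow hup (y := fun s => x (m + s)) (fun s => hxA _ (Nat.le_add_right m s))
      (fun s i => hstep (m + s) ▸ hdec _ (hd _) _ (hxA _ (Nat.le_add_right m s)) i) (t - m)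
    simpa [Nat.add_sub_cancel' hmt] using this
  rw [neg_neg, ← Real.rpow_def_of_pos hρ0, Real.rpow_natCast]
  exact hbound (fun t => ‖x t - xstar‖) (fun t => norm_nonneg _)
    (fun t => hstep t ▸ hLip _ (hd t) _ (hxS t)) hdecay t

theorem stmt_6 {n l lV : ℕ}
    (S : Set (EuclideanSpace ℝ (Fin n))) (hSclosed : IsClosed S) (hSne : S.Nonempty)
    (xstar : EuclideanSpace ℝ (Fin n)) (hxstarS : xstar ∈ S)
    (D : Set (EuclideanSpace ℝ (Fin l))) (hDcomp : IsCompact D) (hDne : D.Nonempty)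
    (F : EuclideanSpace ℝ (Fin l) → EuclideanSpace ℝ (Fin n) → EuclideanSpace ℝ (Fin n))
    (hFS : ∀ d ∈ D, ∀ x ∈ S, F d x ∈ S)
    (hFeq : ∀ d ∈ D, F d xstar = xstar)
    (A : Set (EuclideanSpace ℝ (Fin n))) (hAS : A ⊆ S)
    (m : ℕ)
    (htrap : ∀ (x : ℕ → EuclideanSpace ℝ (Fin n)) (d : ℕ → EuclideanSpace ℝ (Fin l)),
        x 0 ∈ S → (∀ t, d t ∈ D) → (∀ t, x (t + 1) = F (d t) (x t)) →
        ∀ t, m ≤ t → x t ∈ A)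
    (V : Fin lV → EuclideanSpace ℝ (Fin n) → ℝ)
    (hVnonneg : ∀ i x, 0 ≤ V i x)
    (Γ : Matrix (Fin lV) (Fin lV) ℝ)
    (hΓ : ∀ i j, 0 ≤ Γ i j)
    (hρ : ∀ μ : ℂ, ((Γ.map Complex.ofReal).charpoly).IsRoot μ → ‖μ‖ < 1)
    (K₁ K₂ p L : ℝ) (hK₁ : 0 < K₁) (hK : K₁ ≤ K₂) (hp : 0 < p) (hL : 0 ≤ L)
    (hlow : ∀ x ∈ A, ∃ i, K₁ * ‖x - xstar‖ ^ p ≤ V i x)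
    (hup : ∀ x ∈ A, ∀ i, V i x ≤ K₂ * ‖x - xstar‖ ^ p)
    (hdec : ∀ d ∈ D, ∀ x ∈ A, ∀ i, V i (F d x) ≤ ∑ j, Γ i j * V j x)
    (hLip : ∀ d ∈ D, ∀ x ∈ S, ‖F d x - xstar‖ ≤ L * ‖x - xstar‖) :
    ∃ M σ : ℝ, 0 < M ∧ 0 < σ ∧
      ∀ (x : ℕ → EuclideanSpace ℝ (Fin n)) (d : ℕ → EuclideanSpace ℝ (Fin l)),
        x 0 ∈ S → (∀ t, d t ∈ D) → (∀ t, x (t + 1) = F (d t) (x t)) →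
        ∀ t : ℕ, ‖x t - xstar‖ ≤ M * Real.exp (-σ * t) * ‖x 0 - xstar‖ :=
  stmt_6_general S xstar D F hFS A m htrap V hVnonneg Γ hΓ hρ K₁ K₂ p L hK₁ hK hp hlow hup hdec hLip
end

section
/- Let A = [b₁,c₁]×…×[b_n,c_n] be a trapping region for the freeway system x₁⁺ = x₁ − min(a₂−x₂, f₁(x₁)) + min(a₁−x₁, v), x_i⁺ = x_i − min(a_{i+1}−x_{i+1}, f_i(x_i)) + min(a_i−x_i, f_{i−1}(x_{i−1})) for 2 ≤ i ≤ n−1, x_n⁺ = x_n − f_n(x_n) + min(a_n−x_n, f_{n−1}(x_{n−1})). Suppose c ∈ [0,c₁] with c ≥ x₁* satisfies: min_{c ≤ s ≤ c₁}(min(a₂−c₂, f₁(s)) − min(a₁−s, v)) > 0 and max_{b₁ ≤ s ≤ c}(s − min(a₂−c₂, f₁(s)) + min(a₁−s, v)) ≤ c. Then the set [b₁,c]×[b₂,c₂]×…×[b_n,c_n] is also a trapping region for the system. -/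
/-- One step of the freeway dynamics (components indexed `1,…,n`). -/
def FreewayStep (n : ℕ) (a : ℕ → ℝ) (f : ℕ → ℝ → ℝ) (v : ℝ) (x : ℕ → ℝ) : ℕ → ℝ :=
  fun i =>
    if i = 1 then x 1 - min (a 2 - x 2) (f 1 (x 1)) + min (a 1 - x 1) v
    else if i = n then x n - f n (x n) + min (a n - x n) (f (n - 1) (x (n - 1)))
    else x i - min (a (i + 1) - x (i + 1)) (f i (x i)) +
      min (a i - x i) (f (i - 1) (x (i - 1)))

/-- Membership in the box `[lo 1, hi 1] × … × [lo n, hi n]`. -/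
def InBox (n : ℕ) (lo hi : ℕ → ℝ) (x : ℕ → ℝ) : Prop :=
  ∀ i, 1 ≤ i → i ≤ n → lo i ≤ x i ∧ x i ≤ hi i

/-- The box `[lo 1, hi 1] × … × [lo n, hi n]` is a trapping region for the freeway system:
all solutions starting in the state space `[0,a₁]×…×[0,aₙ]` enter the box after at most
`m` steps and stay there. -/
def IsTrappingBox (n : ℕ) (a : ℕ → ℝ) (f : ℕ → ℝ → ℝ) (v : ℝ) (lo hi : ℕ → ℝ) : Prop :=
  ∃ m : ℕ, ∀ x : ℕ → ℕ → ℝ,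
    InBox n (fun _ => 0) a (x 0) →
    (∀ t, x (t + 1) = FreewayStep n a f v (x t)) →
    ∀ t, m ≤ t → InBox n lo hi (x t)

/-!
Once the solution is in the box `[b, c̄]`, its second coordinate is at most `c̄₂`, so the outflow
`min (a₂ - x₂) (f₁ x₁)` of the first cell is at least `min (a₂ - c̄₂) (f₁ x₁)`. The first
coordinate is therefore bounded by the scalar map `s ↦ s - min (a₂ - c̄₂) (f₁ s) + min (a₁ - s) v`.
By the max condition this map sends `[b₁, c]` into `(-∞, c]`, and by the min condition it
decreases every point of `[c, c̄₁]` by at least a fixed `ε > 0`; hence after at most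
`⌈(c̄₁ - c) / ε⌉` further steps the first coordinate is at most `c` and stays there.
-/

open Set

theorem InBox.update_hi {n : ℕ} {lo hi x : ℕ → ℝ} (hx : InBox n lo hi x) {j : ℕ} {c : ℝ}
    (hj : x j ≤ c) : InBox n lo (Function.update hi j c) x := by
  intro i hi1 hin
  rcases eq_or_ne i j with rfl | hij
  · simpa using ⟨(hx i hi1 hin).1, hj⟩
  · simpa [Function.update_of_ne hij] using hx i hi1 hin

theorem freewayStep_one_le {n : ℕ} {a : ℕ → ℝ} {f : ℕ → ℝ → ℝ} {v C : ℝ} {x : ℕ → ℝ}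
    (hx : x 2 ≤ C) :
    FreewayStep n a f v x 1 ≤ x 1 - min (a 2 - C) (f 1 (x 1)) + min (a 1 - x 1) v := by
  have : min (a 2 - C) (f 1 (x 1)) ≤ min (a 2 - x 2) (f 1 (x 1)) :=
    min_le_min_right _ (by linarith)
  simp only [FreewayStep, ↓reduceIte]
  linarith

theorem le_of_ceil_le_of_step {u : ℕ → ℝ} {U c ε : ℝ} (hε : 0 < ε) (hU : u 0 ≤ U)
    (hinv : ∀ k, u k ≤ c → u (k + 1) ≤ c) (hdec : ∀ k, c < u k → u (k + 1) ≤ u k - ε) :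
    ∀ k, ⌈(U - c) / ε⌉₊ ≤ k → u k ≤ c := by
  have hdrop : ∀ k : ℕ, u k ≤ c ∨ u k ≤ U - k * ε := by
    intro k
    induction k with
    | zero => simpa using .inr hU
    | succ k ih =>
      rcases le_or_gt (u k) c with h | h
      · exact .inl (hinv k h)
      · have := hdec k h
        rcases ih with ih | ih
        · exact absurd ih h.not_ge
        · right; push_cast; linarith
  intro k hk
  induction k, hk using Nat.le_induction with
  | base =>
    have : U - c ≤ ⌈(U - c) / ε⌉₊ * ε := (div_le_iff₀ hε).1 (Nat.le_ceil _)
    rcases hdrop ⌈(U - c) / ε⌉₊ with h | h <;> linarith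
  | succ k _ ih => exact hinv k ih

theorem stmt_12_general (n : ℕ) (hn : 3 ≤ n)
    (a : ℕ → ℝ)
    (f : ℕ → ℝ → ℝ)
    (hfc : ∀ i, 1 ≤ i → i ≤ n → ContinuousOn (f i) (Set.Icc 0 (a i)))
    (v : ℝ)
    (b cbar : ℕ → ℝ)
    (hbc : ∀ i, 1 ≤ i → i ≤ n → 0 ≤ b i ∧ b i < cbar i ∧ cbar i ≤ a i)
    (htrap : IsTrappingBox n a f v b cbar)
    (c : ℝ) (hc0 : 0 ≤ c) (hc1 : c ≤ cbar 1)
    (hmin : 0 < sInf ((fun s => min (a 2 - cbar 2) (f 1 s) - min (a 1 - s) v) ''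
      Set.Icc c (cbar 1)))
    (hmax : sSup ((fun s => s - min (a 2 - cbar 2) (f 1 s) + min (a 1 - s) v) ''
      Set.Icc (b 1) c) ≤ c) :
    IsTrappingBox n a f v b (Function.update cbar 1 c) := by
  obtain ⟨m, hm⟩ := htrap
  obtain ⟨hb1, -, hca⟩ := hbc 1 le_rfl (by omega)
  have hf1 := hfc 1 le_rfl (by omega)
  have hf1_hi : ContinuousOn (f 1) (Icc c (cbar 1)) := hf1.mono (Icc_subset_Icc hc0 hca)
  have hf1_lo : ContinuousOn (f 1) (Icc (b 1) c) := hf1.mono (Icc_subset_Icc hb1 (hc1.trans hca))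
  have hBelow := isCompact_Icc.bddBelow_image (by fun_prop :
    ContinuousOn (fun s => min (a 2 - cbar 2) (f 1 s) - min (a 1 - s) v) (Icc c (cbar 1)))
  have hAbove := isCompact_Icc.bddAbove_image (by fun_prop :
    ContinuousOn (fun s => s - min (a 2 - cbar 2) (f 1 s) + min (a 1 - s) v) (Icc (b 1) c))
  obtain ⟨ε, hε, hdec⟩ : ∃ ε > 0, ∀ s ∈ Icc c (cbar 1),
      ε ≤ min (a 2 - cbar 2) (f 1 s) - min (a 1 - s) v :=
    ⟨_, hmin, fun s hs => csInf_le hBelow (mem_image_of_mem _ hs)⟩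
  have hinv : ∀ s ∈ Icc (b 1) c, s - min (a 2 - cbar 2) (f 1 s) + min (a 1 - s) v ≤ c :=
    fun s hs => (le_csSup hAbove (mem_image_of_mem _ hs)).trans hmax
  refine ⟨m + ⌈(cbar 1 - c) / ε⌉₊, fun x hx0 hstep t ht => ?_⟩
  have hbox := hm x hx0 hstep
  have hx1 (k : ℕ) := hbox (m + k) (by omega) 1 le_rfl (by omega)
  have hx1_succ (k : ℕ) : x (m + k + 1) 1 ≤ x (m + k) 1 - min (a 2 - cbar 2) (f 1 (x (m + k) 1))
      + min (a 1 - x (m + k) 1) v := by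
    rw [hstep]
    exact freewayStep_one_le (hbox (m + k) (by omega) 2 (by omega) (by omega)).2
  have hfirst := le_of_ceil_le_of_step (u := fun k => x (m + k) 1) hε (hx1 0).2
    (fun k hk => (hx1_succ k).trans (hinv _ ⟨(hx1 k).1, hk⟩))
    (fun k hk => show x (m + k + 1) 1 ≤ _ - ε by
      linarith [hx1_succ k, hdec _ ⟨hk.le, (hx1 k).2⟩])
  obtain ⟨k, rfl⟩ := Nat.exists_eq_add_of_le (le_of_add_le_left ht)
  exact (hbox _ (by omega)).update_hi (hfirst k (by omega))

theorem stmt_12 (n : ℕ) (hn : 3 ≤ n)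
    (a : ℕ → ℝ) (ha : ∀ i, 1 ≤ i → i ≤ n → 0 < a i)
    (f : ℕ → ℝ → ℝ)
    (hfc : ∀ i, 1 ≤ i → i ≤ n → ContinuousOn (f i) (Set.Icc 0 (a i)))
    (hf : ∀ i, 1 ≤ i → i ≤ n → ∀ s ∈ Set.Icc (0 : ℝ) (a i), 0 ≤ f i s ∧ f i s ≤ s)
    (v : ℝ) (hv : 0 < v)
    (xstar : ℕ → ℝ)
    (hxstar : ∀ i, 1 ≤ i → i ≤ n →
      xstar i ∈ Set.Icc (0 : ℝ) (a i) ∧ f i (xstar i) = v ∧ xstar i + v < a i)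
    (b cbar : ℕ → ℝ)
    (hbc : ∀ i, 1 ≤ i → i ≤ n → 0 ≤ b i ∧ b i < cbar i ∧ cbar i ≤ a i)
    (htrap : IsTrappingBox n a f v b cbar)
    (c : ℝ) (hc0 : 0 ≤ c) (hc1 : c ≤ cbar 1) (hcx : xstar 1 ≤ c)
    (hmin : 0 < sInf ((fun s => min (a 2 - cbar 2) (f 1 s) - min (a 1 - s) v) ''
      Set.Icc c (cbar 1)))
    (hmax : sSup ((fun s => s - min (a 2 - cbar 2) (f 1 s) + min (a 1 - s) v) ''
      Set.Icc (b 1) c) ≤ c) :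
    IsTrappingBox n a f v b (Function.update cbar 1 c) :=
  stmt_12_general n hn a f hfc v b cbar hbc htrap c hc0 hc1 hmin hmax
end

section
/- Let A = [b₁,c₁]×…×[b_n,c_n] be a trapping region for the freeway system (as in the previous context). Suppose b ∈ [b₁, a₁] with b ≤ x₁* satisfies: v > max_{b₁ ≤ s ≤ b} f₁(s) and min_{b ≤ s ≤ c₁}(s − min(a₂−b₂, f₁(s)) + min(a₁−s, v)) ≥ b. Then the set [b,c₁]×[b₂,c₂]×…×[b_n,c_n] is also a trapping region for the system. -/
theorem stmt_13 (n : ℕ) (hn : 3 ≤ n)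
    (a : ℕ → ℝ) (ha : ∀ i, 1 ≤ i → i ≤ n → 0 < a i)
    (f : ℕ → ℝ → ℝ)
    (hfc : ∀ i, 1 ≤ i → i ≤ n → ContinuousOn (f i) (Set.Icc 0 (a i)))
    (hf : ∀ i, 1 ≤ i → i ≤ n → ∀ s ∈ Set.Icc (0 : ℝ) (a i), 0 ≤ f i s ∧ f i s ≤ s)
    (v : ℝ) (hv : 0 < v)
    (xstar : ℕ → ℝ)
    (hxstar : ∀ i, 1 ≤ i → i ≤ n →
      xstar i ∈ Set.Icc (0 : ℝ) (a i) ∧ f i (xstar i) = v ∧ xstar i + v < a i)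
    (blo cbar : ℕ → ℝ)
    (hbc : ∀ i, 1 ≤ i → i ≤ n → 0 ≤ blo i ∧ blo i < cbar i ∧ cbar i ≤ a i)
    (htrap : IsTrappingBox n a f v blo cbar)
    (b : ℝ) (hb1 : blo 1 ≤ b) (hba : b ≤ a 1) (hbx : b ≤ xstar 1)
    (hvmax : sSup ((f 1) '' Set.Icc (blo 1) b) < v)
    (hmin : b ≤ sInf ((fun s => s - min (a 2 - blo 2) (f 1 s) + min (a 1 - s) v) ''
      Set.Icc b (cbar 1))) :
    IsTrappingBox n a f v (Function.update blo 1 b) cbar := by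
 
  have h1n : 1 ≤ n := by omega
  have h2n : 2 ≤ n := by omega
  obtain ⟨hb1pos, hb1c, hc1a⟩ := hbc 1 le_rfl h1n
  obtain ⟨hb2pos, hb2c, hc2a⟩ := hbc 2 (by omega) h2n
  obtain ⟨m, hm⟩ := htrap
  set M := sSup ((f 1) '' Set.Icc (blo 1) b) with hMdef
  have hδ : 0 < v - M := by linarith
  have hsub1 : Set.Icc (blo 1) b ⊆ Set.Icc 0 (a 1) := Set.Icc_subset_Icc hb1pos hba
  have hsub2 : Set.Icc b (cbar 1) ⊆ Set.Icc 0 (a 1) :=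
    Set.Icc_subset_Icc (le_trans hb1pos hb1) hc1a
  have hMub : ∀ s ∈ Set.Icc (blo 1) b, f 1 s ≤ M := by
    intro s hs
    have hcomp : IsCompact ((f 1) '' Set.Icc (blo 1) b) :=
      (isCompact_Icc).image_of_continuousOn ((hfc 1 le_rfl h1n).mono hsub1)
    exact le_csSup hcomp.bddAbove ⟨s, hs, rfl⟩
  have hg : ContinuousOn (fun s => s - min (a 2 - blo 2) (f 1 s) + min (a 1 - s) v)
      (Set.Icc b (cbar 1)) := by
    apply ContinuousOn.add
    · exact (continuousOn_id).sub
        ((continuous_const.min continuous_id).comp_continuousOn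
          ((hfc 1 le_rfl h1n).mono hsub2))
    · exact ((continuous_const.sub continuous_id).min continuous_const).continuousOn
  have hInf : ∀ s ∈ Set.Icc b (cbar 1),
      b ≤ s - min (a 2 - blo 2) (f 1 s) + min (a 1 - s) v := by
    intro s hs
    have hcomp : IsCompact ((fun s => s - min (a 2 - blo 2) (f 1 s) + min (a 1 - s) v) ''
        Set.Icc b (cbar 1)) := isCompact_Icc.image_of_continuousOn hg
    exact le_trans hmin (csInf_le hcomp.bddBelow ⟨s, hs, rfl⟩)
  set k := Nat.ceil ((b - blo 1) / (v - M)) with hkdef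
  refine ⟨m + k, ?_⟩
  intro x hx0 hstep t ht
  have hold : ∀ s, m ≤ s → InBox n blo cbar (x s) := hm x hx0 hstep
  have hstep1 : ∀ s, x (s + 1) 1 =
      x s 1 - min (a 2 - x s 2) (f 1 (x s 1)) + min (a 1 - x s 1) v := by
    intro s; rw [hstep s]; simp [FreewayStep]
  have hclimb : ∀ s, m ≤ s → x s 1 < b → x s 1 + (v - M) ≤ x (s + 1) 1 := by
    intro s hs hlt
    have h1 := (hold s hs) 1 le_rfl h1n
    have hM' := hMub (x s 1) ⟨h1.1, le_of_lt hlt⟩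
    have hmin1 : min (a 2 - x s 2) (f 1 (x s 1)) ≤ M :=
      le_trans (min_le_right _ _) hM'
    have hxs := (hxstar 1 le_rfl h1n).2.2
    have hvle : v ≤ a 1 - x s 1 := by linarith
    have hv2 : min (a 1 - x s 1) v = v := min_eq_right hvle
    rw [hstep1 s, hv2]
    linarith
  have hinv : ∀ s, m ≤ s → b ≤ x s 1 → b ≤ x (s + 1) 1 := by
    intro s hs hge
    have h1 := (hold s hs) 1 le_rfl h1n
    have h2 := (hold s hs) 2 (by omega) h2n
    have hmono : min (a 2 - x s 2) (f 1 (x s 1)) ≤ min (a 2 - blo 2) (f 1 (x s 1)) :=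
      min_le_min (by linarith [h2.1]) le_rfl
    have hI := hInf (x s 1) ⟨hge, h1.2⟩
    rw [hstep1 s]
    linarith
  have hkey : ∀ j : ℕ, b ≤ x (m + j) 1 ∨ blo 1 + j * (v - M) ≤ x (m + j) 1 := by
    intro j
    induction j with
    | zero => right; simpa using ((hold m le_rfl) 1 le_rfl h1n).1
    | succ j ih =>
      have heq : m + (j + 1) = m + j + 1 := by omega
      rcases ih with h | h
      · left
        have := hinv (m + j) (by omega) h
        rw [heq]; exact this
      · by_cases hc : b ≤ x (m + j) 1
        · left
          have := hinv (m + j) (by omega) hc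
          rw [heq]; exact this
        · right
          have hcl := hclimb (m + j) (by omega) (lt_of_not_ge hc)
          rw [heq]
          push_cast
          linarith
  have hbk : b ≤ x (m + k) 1 := by
    rcases hkey k with h | h
    · exact h
    · have h1 : (b - blo 1) / (v - M) ≤ (k : ℝ) := Nat.le_ceil _
      have h2 : b - blo 1 ≤ (k : ℝ) * (v - M) := by
        rw [div_le_iff₀ hδ] at h1; linarith
      linarith
  have hall : ∀ s, m + k ≤ s → b ≤ x s 1 := by
    intro s hs
    obtain ⟨j, rfl⟩ := Nat.exists_eq_add_of_le hs
    clear hs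
    induction j with
    | zero => simpa using hbk
    | succ j ih =>
      have heq : m + k + (j + 1) = (m + k + j) + 1 := by omega
      rw [heq]
      exact hinv (m + k + j) (by omega) ih
  intro i hi1 hin
  by_cases hi : i = 1
  · subst hi
    refine ⟨?_, ((hold t (by omega)) 1 le_rfl h1n).2⟩
    rw [Function.update_self]
    exact hall t ht
  · have hOB := (hold t (by omega)) i hi1 hin
    rw [Function.update_of_ne hi]
    exact hOB
end

section
/- Consider the linear uncertain system on ℝⁿ: x₁⁺ = (1−2r)x₁ + d x₂, x_i⁺ = d x_{i−1} + (1−2r)x_i + d x_{i+1} for 2 ≤ i ≤ n−1, x_n⁺ = d x_{n−1} + (1−2r)x_n, where d ∈ [−r, r] at each time step and 0 < r ≤ 1/2. Then the origin is robustly globally exponentially stable: there exist M, σ > 0 such that every solution (with arbitrary disturbance sequence d_t ∈ [−r,r]) satisfies |x(t)| ≤ M exp(−σ t)|x(0)| for all t ∈ ℕ. -/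
/-!
The vector `w` with `w_k = sin (k π / (n + 1))`, `k = 1, …, n`, is the positive eigenvector of the
adjacency matrix of the path on `n` vertices, with eigenvalue `2 cos (π / (n + 1))`, and it
vanishes at the missing neighbours `k = 0` and `k = n + 1` (coordinate `i : Fin n` is
`k = i + 1`). So whatever disturbance
`d ∈ [-r, r]` acts, a bound `|x_k| ≤ c w_k` propagates to `|x_k⁺| ≤ ρ c w_k` with
`ρ = 1 - 2 r (1 - cos (π / (n + 1))) ∈ [0, 1)`. Comparing this weighted sup-norm with the
Euclidean norm and using `ρ ≤ exp (ρ - 1)` gives the exponential bound.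
-/

open Real

noncomputable section

def sineWeight (n k : ℕ) : ℝ := sin (k * (π / (n + 1)))

def neighbourSum {n : ℕ} (x : EuclideanSpace ℝ (Fin n)) (i : Fin n) : ℝ :=
  (if 0 < (i : ℕ) then x ⟨(i : ℕ) - 1, (Nat.sub_le _ _).trans_lt i.isLt⟩ else 0) +
    (if h : (i : ℕ) + 1 < n then x ⟨(i : ℕ) + 1, h⟩ else 0)

def contractionFactor (n : ℕ) (r : ℝ) : ℝ := 1 - 2 * r * (1 - cos (π / (n + 1)))

end

theorem EuclideanSpace.norm_le_sqrt_card_mul {ι : Type*} [Fintype ι] {x : EuclideanSpace ℝ ι}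
    {C : ℝ} (hC : 0 ≤ C) (hx : ∀ i, |x i| ≤ C) : ‖x‖ ≤ √(Fintype.card ι) * C := by
  calc ‖x‖ = √(∑ i, ‖x i‖ ^ 2) := EuclideanSpace.norm_eq x
    _ ≤ √(∑ _ : ι, C ^ 2) := by
      gcongr with i
      exact hx i
    _ = √(Fintype.card ι) * C := by
      rw [Finset.sum_const, Finset.card_univ, nsmul_eq_mul, sqrt_mul (by positivity),
        sqrt_sq hC]

theorem sin_sub_add_sin_add (a b : ℝ) : sin (a - b) + sin (a + b) = 2 * cos b * sin a := by
  rw [sin_sub, sin_add]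
  ring

section SineWeight

variable {n : ℕ}

theorem sineWeight_pos {k : ℕ} (hk : 0 < k) (hkn : k < n + 1) : 0 < sineWeight n k := by
  apply sin_pos_of_pos_of_lt_pi (by positivity)
  calc (k : ℝ) * (π / (n + 1)) < (n + 1) * (π / (n + 1)) := by gcongr; exact_mod_cast hkn
    _ = π := by field_simp

theorem sineWeight_le_one (k : ℕ) : sineWeight n k ≤ 1 := sin_le_one _

theorem sineWeight_zero : sineWeight n 0 = 0 := by simp [sineWeight]

theorem sineWeight_succ_self : sineWeight n (n + 1) = 0 := by
  rw [sineWeight, Nat.cast_succ, mul_div_cancel₀ _ (by positivity), sin_pi]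

theorem sineWeight_add_sineWeight_add_two (k : ℕ) :
    sineWeight n k + sineWeight n (k + 2) = 2 * cos (π / (n + 1)) * sineWeight n (k + 1) := by
  rw [sineWeight, sineWeight, sineWeight, ← sin_sub_add_sin_add]
  congr 2 <;> push_cast <;> ring

theorem abs_neighbourSum_le {x : EuclideanSpace ℝ (Fin n)} {c : ℝ}
    (hx : ∀ j : Fin n, |x j| ≤ c * sineWeight n (j + 1)) (i : Fin n) :
    |neighbourSum x i| ≤ c * (2 * cos (π / (n + 1)) * sineWeight n (i + 1)) := by
  rw [← sineWeight_add_sineWeight_add_two, mul_add]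
  refine (abs_add_le _ _).trans (add_le_add ?_ ?_)
  · split_ifs with h
    · simpa [Nat.sub_add_cancel h] using hx ⟨i - 1, by omega⟩
    · simp [show (i : ℕ) = 0 by omega, sineWeight_zero]
  · split_ifs with h
    · exact hx ⟨i + 1, h⟩
    · simp [show (i : ℕ) + 2 = n + 1 by omega, sineWeight_succ_self]

end SineWeight

section Contraction

variable {n : ℕ} {r : ℝ}

theorem contractionFactor_nonneg (hn : 1 ≤ n) (hr2 : r ≤ 1 / 2) : 0 ≤ contractionFactor n r := by
  have hcos : 0 ≤ cos (π / (n + 1)) := by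
    apply cos_nonneg_of_neg_pi_div_two_le_of_le
      (by linarith [pi_pos, show 0 < π / (n + 1) by positivity])
    gcongr
    norm_cast
    omega
  unfold contractionFactor
  nlinarith [cos_le_one (π / (n + 1))]

theorem contractionFactor_lt_one (hr : 0 < r) : contractionFactor n r < 1 := by
  have hcos : cos (π / (n + 1)) < 1 := by
    simpa using cos_lt_cos_of_nonneg_of_le_pi le_rfl
      (div_le_self pi_pos.le (by norm_cast; omega)) (by positivity : 0 < π / (n + 1))
  unfold contractionFactor
  nlinarith

theorem abs_step_le {x : EuclideanSpace ℝ (Fin n)} {c d : ℝ} (hr2 : r ≤ 1 / 2) (hd : |d| ≤ r)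
    (hx : ∀ j : Fin n, |x j| ≤ c * sineWeight n (j + 1)) (i : Fin n) :
    |(1 - 2 * r) * x i + d * neighbourSum x i| ≤
      contractionFactor n r * c * sineWeight n (i + 1) := by
  have hr : 0 ≤ r := (abs_nonneg d).trans hd
  calc |(1 - 2 * r) * x i + d * neighbourSum x i|
      ≤ (1 - 2 * r) * |x i| + r * |neighbourSum x i| := by
        refine (abs_add_le _ _).trans ?_
        rw [abs_mul, abs_mul, abs_of_nonneg (by linarith)]
        gcongr
    _ ≤ (1 - 2 * r) * (c * sineWeight n (i + 1)) +
          r * (c * (2 * cos (π / (n + 1)) * sineWeight n (i + 1))) := by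
        gcongr
        · linarith
        · exact hx i
        · exact abs_neighbourSum_le hx i
    _ = contractionFactor n r * c * sineWeight n (i + 1) := by
        unfold contractionFactor
        ring

theorem abs_le_contractionFactor_pow_mul {x : ℕ → EuclideanSpace ℝ (Fin n)} {d : ℕ → ℝ} {c : ℝ}
    (hr2 : r ≤ 1 / 2) (hd : ∀ t, |d t| ≤ r)
    (hx : ∀ t i, x (t + 1) i = (1 - 2 * r) * x t i + d t * neighbourSum (x t) i)
    (h0 : ∀ j : Fin n, |x 0 j| ≤ c * sineWeight n (j + 1)) (t : ℕ) (i : Fin n) :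
    |x t i| ≤ contractionFactor n r ^ t * c * sineWeight n (i + 1) := by
  induction t generalizing i with
  | zero => simpa using h0 i
  | succ t ih =>
    rw [hx, pow_succ', mul_assoc (contractionFactor n r)]
    exact abs_step_le hr2 (hd t) ih i

end Contraction

theorem abs_apply_le_norm_div_mul {ι : Type*} [Fintype ι] (x : EuclideanSpace ℝ ι) {w : ι → ℝ}
    {i₀ : ι} (hw : 0 < w i₀) (hmin : ∀ j, w i₀ ≤ w j) (j : ι) : |x j| ≤ ‖x‖ / w i₀ * w j :=
  calc |x j| ≤ ‖x‖ := PiLp.norm_apply_le x j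
    _ = ‖x‖ / w i₀ * w i₀ := (div_mul_cancel₀ _ hw.ne').symm
    _ ≤ ‖x‖ / w i₀ * w j := by gcongr; exact hmin j

theorem pow_le_exp_neg_mul {a : ℝ} (ha : 0 ≤ a) (t : ℕ) : a ^ t ≤ exp (-(1 - a) * t) := by
  calc a ^ t ≤ exp (-(1 - a)) ^ t := by
        gcongr
        simpa using one_sub_le_exp_neg (1 - a)
    _ = exp (-(1 - a) * t) := by rw [← exp_nat_mul, mul_comm]

theorem stmt_19 {n : ℕ} (hn : 2 ≤ n) (r : ℝ) (hr : 0 < r) (hr2 : r ≤ 1 / 2) :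
    ∃ M σ : ℝ, 0 < M ∧ 0 < σ ∧
      ∀ (x : ℕ → EuclideanSpace ℝ (Fin n)) (d : ℕ → ℝ),
        (∀ t, d t ∈ Set.Icc (-r) r) →
        (∀ (t : ℕ) (i : Fin n), x (t + 1) i =
          (1 - 2 * r) * x t i +
            d t * ((if h : 0 < (i : ℕ) then x t ⟨(i : ℕ) - 1, by omega⟩ else 0) +
              (if h : (i : ℕ) + 1 < n then x t ⟨(i : ℕ) + 1, h⟩ else 0))) →
        ∀ t : ℕ, ‖x t‖ ≤ M * Real.exp (-σ * t) * ‖x 0‖ := by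
  have : Nonempty (Fin n) := ⟨⟨0, by omega⟩⟩
  obtain ⟨i₀, -, hi₀⟩ := Finset.univ.exists_min_image (fun i : Fin n => sineWeight n (i + 1))
    Finset.univ_nonempty
  have hw₀ : 0 < sineWeight n (i₀ + 1) := sineWeight_pos (by omega) (by omega)
  set ρ := contractionFactor n r
  refine ⟨√n / sineWeight n (i₀ + 1), 1 - ρ, by positivity, ?_, ?_⟩
  · exact sub_pos.2 (contractionFactor_lt_one hr)
  intro x d hd hx t
  have hρ : 0 ≤ ρ := contractionFactor_nonneg (by omega) hr2
  have hbound := abs_le_contractionFactor_pow_mul hr2 (fun t => abs_le.2 (hd t)) hx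
    (abs_apply_le_norm_div_mul (x 0) hw₀ (fun j => hi₀ j (Finset.mem_univ j))) t
  calc ‖x t‖ ≤ √n * (ρ ^ t * (‖x 0‖ / sineWeight n (i₀ + 1))) := by
        simpa using EuclideanSpace.norm_le_sqrt_card_mul (by positivity)
          fun i => (hbound i).trans (mul_le_of_le_one_right (by positivity) (sineWeight_le_one _))
    _ ≤ √n * (exp (-(1 - ρ) * t) * (‖x 0‖ / sineWeight n (i₀ + 1))) := by
        gcongr
        exact pow_le_exp_neg_mul hρ t
    _ = √n / sineWeight n (i₀ + 1) * exp (-(1 - ρ) * t) * ‖x 0‖ := by ring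
end
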